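/- Let M ⊂ ℝⁿ be a helix hypersurface with respect to a fixed unit direction d, and let α : I → M be a unit-speed geodesic on M with nonvanishing curvature. Then the tangent indicatrix α'(s), reparametrized by arclength, is a general helix (spherical helix) on the unit hypersphere S^{n-1} with axis d. -/

import Mathlib

open scoped RealInnerProductSpace

/-!
Along a geodesic the acceleration `α'' = λ ξ(α)` is normal to `M`, so the unit tangent of the
indicatrix `β = α'` is `sign λ · ξ(α)`. Its inner product with the axis is therefore
`sign λ · ⟪d, ξ⟫`, which is constant: `⟪d, ξ⟫` is constant on a helix hypersurface, and `λ`,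
being continuous and nonvanishing on the interval (the curvature of `α` is `|λ|`), has constant
sign by the intermediate value theorem.
-/

theorem IsPreconnected.sign_eq_of_continuousOn {I : Set ℝ} (hI : IsPreconnected I) {f : ℝ → ℝ}
    (hf : ContinuousOn f I) (hf0 : ∀ s ∈ I, f s ≠ 0) {a b : ℝ} (ha : a ∈ I) (hb : b ∈ I) :
    SignType.sign (f a) = SignType.sign (f b) := by
  rcases (hf0 a ha).lt_or_gt with ha' | ha' <;> rcases (hf0 b hb).lt_or_gt with hb' | hb'
  · rw [sign_neg ha', sign_neg hb']
  · obtain ⟨t, ht, hft⟩ := hI.intermediate_value ha hb hf ⟨ha'.le, hb'.le⟩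
    exact absurd hft (hf0 t ht)
  · obtain ⟨t, ht, hft⟩ := hI.intermediate_value hb ha hf ⟨hb'.le, ha'.le⟩
    exact absurd hft (hf0 t ht)
  · rw [sign_pos ha', sign_pos hb']

theorem inv_abs_mul_self (r : ℝ) : |r|⁻¹ * r = SignType.sign r := by
  rcases eq_or_ne r 0 with rfl | hr
  · simp
  · nth_rw 2 [← abs_mul_sign r]
    rw [inv_mul_cancel_left₀ (abs_ne_zero.mpr hr)]

theorem inv_norm_smul_smul_of_norm_eq_one {E : Type*} [NormedAddCommGroup E] [NormedSpace ℝ E]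
    (r : ℝ) {u : E} (hu : ‖u‖ = 1) : ‖r • u‖⁻¹ • r • u = (SignType.sign r : ℝ) • u := by
  rw [norm_smul, hu, mul_one, smul_smul, Real.norm_eq_abs, inv_abs_mul_self]

theorem tangent_indicatrix_of_geodesic_is_spherical_helix_general
    (n : ℕ) (M : Set (EuclideanSpace ℝ (Fin n)))
    (ξ : EuclideanSpace ℝ (Fin n) → EuclideanSpace ℝ (Fin n))
    (hξunit : ∀ p ∈ M, ‖ξ p‖ = 1)
    (d : EuclideanSpace ℝ (Fin n))
    (hhelix : ∃ c : ℝ, ∀ p ∈ M, ⟪d, ξ p⟫ = c)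
    (I : Set ℝ) (hconn : IsPreconnected I)
    (α : ℝ → EuclideanSpace ℝ (Fin n))
    (hαM : ∀ s ∈ I, α s ∈ M)
    (hunit : ∀ s ∈ I, ‖deriv α s‖ = 1)
    (lam : ℝ → ℝ) (hlamcont : ContinuousOn lam I)
    (hgeo : ∀ s ∈ I, deriv (deriv α) s = lam s • ξ (α s))
    (hκpos : ∀ s ∈ I, 0 < ‖deriv (deriv α) s‖)
    (β : ℝ → EuclideanSpace ℝ (Fin n)) (hβ : β = deriv α)
    (sβ ψ : ℝ → ℝ)
    (hψinv : ∀ s ∈ I, ψ (sβ s) = s)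
    (hψd : ∀ s ∈ I, HasDerivAt ψ ‖deriv β s‖⁻¹ (sβ s)) :
    (∀ s ∈ I, β s ∈ Metric.sphere (0 : EuclideanSpace ℝ (Fin n)) 1) ∧
      ∃ c : ℝ, ∀ s ∈ I, ⟪deriv (β ∘ ψ) (sβ s), d⟫ = c := by
  subst hβ
  obtain ⟨c, hc⟩ := hhelix
  refine ⟨fun s hs => mem_sphere_zero_iff_norm.mpr (hunit s hs), ?_⟩
  have hlam : ∀ s ∈ I, lam s ≠ 0 := fun s hs h0 => by
    simpa [hgeo s hs, h0] using hκpos s hs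
  have hinner : ∀ s ∈ I, ⟪deriv (deriv α ∘ ψ) (sβ s), d⟫ = SignType.sign (lam s) * c := by
    intro s hs
    have hβ' : HasDerivAt (deriv α) (deriv (deriv α) s) (ψ (sβ s)) := by
      rw [hψinv s hs]
      exact (differentiableAt_of_deriv_ne_zero (norm_pos_iff.mp (hκpos s hs))).hasDerivAt
    rw [(hβ'.scomp (sβ s) (hψd s hs)).deriv, hgeo s hs,
      inv_norm_smul_smul_of_norm_eq_one _ (hξunit _ (hαM s hs)), real_inner_smul_left,
      real_inner_comm, hc _ (hαM s hs)]
  rcases I.eq_empty_or_nonempty with rfl | ⟨s₀, hs₀⟩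
  · exact ⟨0, by simp⟩
  refine ⟨SignType.sign (lam s₀) * c, fun s hs => ?_⟩
  rw [hinner s hs, hconn.sign_eq_of_continuousOn hlamcont hlam hs hs₀]

/-- Let `M ⊂ ℝⁿ` be a helix hypersurface with respect to a fixed
unit direction `d`, and let `α` be a unit-speed geodesic on `M` with
nonvanishing curvature. Then the tangent indicatrix `β = α'`, reparametrized
by its arclength `sβ` (with inverse `ψ`), is a general helix (spherical helix)
on the unit hypersphere `S^{n-1}` with axis `d`. -/
theorem tangent_indicatrix_of_geodesic_is_spherical_helix
    (n : ℕ) (M : Set (EuclideanSpace ℝ (Fin n)))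
    (ξ : EuclideanSpace ℝ (Fin n) → EuclideanSpace ℝ (Fin n))
    (hξunit : ∀ p ∈ M, ‖ξ p‖ = 1)
    (d : EuclideanSpace ℝ (Fin n)) (hd : ‖d‖ = 1)
    (hhelix : ∃ c : ℝ, ∀ p ∈ M, ⟪d, ξ p⟫ = c)
    (I : Set ℝ) (hconn : IsPreconnected I)
    (α : ℝ → EuclideanSpace ℝ (Fin n))
    (hαM : ∀ s ∈ I, α s ∈ M)
    (hunit : ∀ s ∈ I, ‖deriv α s‖ = 1)
    (lam : ℝ → ℝ) (hlamcont : ContinuousOn lam I)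
    (hgeo : ∀ s ∈ I, deriv (deriv α) s = lam s • ξ (α s))
    (hκpos : ∀ s ∈ I, 0 < ‖deriv (deriv α) s‖)
    (β : ℝ → EuclideanSpace ℝ (Fin n)) (hβ : β = deriv α)
    (sβ ψ : ℝ → ℝ)
    (hsβ : ∀ s ∈ I, HasDerivAt sβ ‖deriv β s‖ s)
    (hψinv : ∀ s ∈ I, ψ (sβ s) = s)
    (hψd : ∀ s ∈ I, HasDerivAt ψ ‖deriv β s‖⁻¹ (sβ s)) :
    (∀ s ∈ I, β s ∈ Metric.sphere (0 : EuclideanSpace ℝ (Fin n)) 1) ∧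
      ∃ c : ℝ, ∀ s ∈ I, ⟪deriv (β ∘ ψ) (sβ s), d⟫ = c :=
  tangent_indicatrix_of_geodesic_is_spherical_helix_general n M ξ hξunit d hhelix I hconn α hαM
    hunit lam hlamcont hgeo hκpos β hβ sβ ψ hψinv hψd
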